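/- arXiv:math/0501364 — 3 statements merged into one kernel-verified Lean document; each statement's English description precedes it below -/
import Mathlib

section
/- Let L be an atomistic lattice. If L has a lattice embedding preserving join, meet, and zero into some finite join-semidistributive biatomic lattice, then L has such an embedding into some finite join-semidistributive biatomic atomistic lattice. -/
def IsBiatomicLat (L : Type*) [Lattice L] [OrderBot L] : Prop :=
  (∀ x : L, x ≠ ⊥ → ∃ p : L, IsAtom p ∧ p ≤ x) ∧
  ∀ p a b : L, IsAtom p → a ≠ ⊥ → b ≠ ⊥ → p ≤ a ⊔ b →
    ∃ x y : L, IsAtom x ∧ x ≤ a ∧ IsAtom y ∧ y ≤ b ∧ p ≤ x ⊔ y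

def AtomisticLat (L : Type*) [Lattice L] [OrderBot L] : Prop :=
  ∀ x : L, ∃ s : Set L, (∀ p ∈ s, IsAtom p) ∧ IsLUB s x

def JoinSemidistributive (L : Type*) [Lattice L] : Prop :=
  ∀ x y z : L, x ⊔ y = x ⊔ z → x ⊔ y = x ⊔ (y ⊓ z)

/-!
In a finite lattice `M`, sending `a` to the join `atomJoin a` of the atoms below it is a kernel
operator, and biatomicity of `M` makes it preserve binary joins. Its fixed points
form a finite atomistic lattice (joins taken in `M`, meets `atomJoin (a ⊓ b)`) inheriting
biatomicity and join-semidistributivity from `M`. Composing the given embedding `f` with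
`atomJoin` preserves joins, meets and `⊥`; it stays injective because `L` is atomistic: an atom
`p ≤ a` of `L` with `p ≰ b` is sent to a nonzero `f p`, and an atom of `M` below `f p` lies under
`atomJoin (f a)` but not under `f b`. Atoms below nonzero elements come for free, since finite
lattices are atomic (`Finite.to_isAtomic`).
-/

open Finset

section AtomJoin

variable {M : Type*} [Lattice M] [OrderBot M] [Fintype M]

open Classical in
noncomputable def atomJoin (a : M) : M :=
  (univ.filter fun p => IsAtom p ∧ p ≤ a).sup id

theorem atomJoin_le_iff {a b : M} : atomJoin a ≤ b ↔ ∀ p, IsAtom p → p ≤ a → p ≤ b := by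
  classical
  simp only [atomJoin, Finset.sup_le_iff, mem_filter, mem_univ, true_and, id, and_imp]

theorem IsAtom.le_atomJoin {p a : M} (hp : IsAtom p) (hpa : p ≤ a) : p ≤ atomJoin a := by
  classical
  exact le_sup (f := id) (by simp [hp, hpa])

theorem atomJoin_le (a : M) : atomJoin a ≤ a :=
  atomJoin_le_iff.2 fun _ _ h => h

theorem atomJoin_mono : Monotone (atomJoin : M → M) := fun _ _ hab =>
  atomJoin_le_iff.2 fun _ hp hpa => hp.le_atomJoin (hpa.trans hab)

theorem atomJoin_atomJoin (a : M) : atomJoin (atomJoin a) = atomJoin a :=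
  (atomJoin_le _).antisymm <| atomJoin_le_iff.2 fun _ hp hpa => hp.le_atomJoin (hp.le_atomJoin hpa)

theorem IsAtom.atomJoin_eq {p : M} (hp : IsAtom p) : atomJoin p = p :=
  (atomJoin_le p).antisymm (hp.le_atomJoin le_rfl)

theorem atomJoin_sup (hM : IsBiatomicLat M) (a b : M) :
    atomJoin (a ⊔ b) = atomJoin a ⊔ atomJoin b := by
  refine le_antisymm (atomJoin_le_iff.2 fun p hp hpab => ?_)
    (sup_le (atomJoin_mono le_sup_left) (atomJoin_mono le_sup_right))
  rcases eq_or_ne a ⊥ with rfl | ha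
  · exact le_sup_of_le_right (hp.le_atomJoin (by simpa using hpab))
  rcases eq_or_ne b ⊥ with rfl | hb
  · exact le_sup_of_le_left (hp.le_atomJoin (by simpa using hpab))
  obtain ⟨x, y, hx, hxa, hy, hyb, hpxy⟩ := hM.2 p a b hp ha hb hpab
  exact hpxy.trans (sup_le_sup (hx.le_atomJoin hxa) (hy.le_atomJoin hyb))

variable (M) in
abbrev AtomJoins : Type _ := {a : M // atomJoin a = a}

noncomputable def toAtomJoins (a : M) : AtomJoins M := ⟨atomJoin a, atomJoin_atomJoin a⟩

namespace AtomJoins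

noncomputable instance : Fintype (AtomJoins M) := by
  classical infer_instance

theorem coe_le_coe {x y : AtomJoins M} : (x : M) ≤ y ↔ x ≤ y := Iff.rfl

theorem atomJoin_coe (x : AtomJoins M) : atomJoin (x : M) = x := x.2

theorem coe_injective : Function.Injective ((↑) : AtomJoins M → M) := Subtype.val_injective

def galoisCoinsertion : GaloisCoinsertion ((↑) : AtomJoins M → M) toAtomJoins where
  choice a h := ⟨a, (atomJoin_le a).antisymm h⟩
  gc x a := by
    show _ ↔ (x : M) ≤ atomJoin a
    exact ⟨fun h => (atomJoin_coe x).ge.trans (atomJoin_mono h), fun h => h.trans (atomJoin_le a)⟩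
  u_l_le x := (atomJoin_coe x).le
  choice_eq a h := Subtype.ext (h.antisymm (atomJoin_le a))

noncomputable instance : Lattice (AtomJoins M) := galoisCoinsertion.liftLattice

instance : OrderBot (AtomJoins M) where
  bot := ⟨⊥, le_bot_iff.1 (atomJoin_le ⊥)⟩
  bot_le x := bot_le (a := (x : M))

theorem coe_eq_bot {x : AtomJoins M} : (x : M) = ⊥ ↔ x = ⊥ := coe_injective.eq_iff' rfl

theorem isAtom_coe_iff {x : AtomJoins M} : IsAtom (x : M) ↔ IsAtom x := by
  refine ⟨fun hx => ⟨mt coe_eq_bot.2 hx.1, fun y hy => coe_eq_bot.1 (hx.2 y hy)⟩, fun hx => ?_⟩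
  obtain ⟨q, hq, hqx⟩ := (eq_bot_or_exists_atom_le (x : M)).resolve_left (mt coe_eq_bot.1 hx.1)
  have hqx' : (⟨q, hq.atomJoin_eq⟩ : AtomJoins M) = x :=
    (hx.le_iff.1 hqx).resolve_left (mt coe_eq_bot.2 hq.1)
  rwa [← hqx']

theorem atomisticLat : AtomisticLat (AtomJoins M) := by
  refine fun x => ⟨{p | IsAtom p ∧ p ≤ x}, fun p hp => hp.1, fun p hp => hp.2, fun b hb => ?_⟩
  rw [← coe_le_coe, ← atomJoin_coe x]
  exact atomJoin_le_iff.2 fun p hp hpx =>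
    coe_le_coe.2 (hb (a := ⟨p, hp.atomJoin_eq⟩) ⟨isAtom_coe_iff.1 hp, hpx⟩)

theorem isBiatomicLat (hM : IsBiatomicLat M) : IsBiatomicLat (AtomJoins M) := by
  refine ⟨fun x hx => (eq_bot_or_exists_atom_le x).resolve_left hx, fun p a b hp ha hb hpab => ?_⟩
  obtain ⟨x, y, hx, hxa, hy, hyb, hpxy⟩ :=
    hM.2 p a b (isAtom_coe_iff.2 hp) (mt coe_eq_bot.1 ha) (mt coe_eq_bot.1 hb) hpab
  exact ⟨⟨x, hx.atomJoin_eq⟩, ⟨y, hy.atomJoin_eq⟩, isAtom_coe_iff.1 hx, hxa,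
    isAtom_coe_iff.1 hy, hyb, hpxy⟩

theorem joinSemidistributive (hM : IsBiatomicLat M) (hJ : JoinSemidistributive M) :
    JoinSemidistributive (AtomJoins M) := by
  intro x y z hxyz
  have hM_eq : (x : M) ⊔ (y : M) = (x : M) ⊔ ((y : M) ⊓ (z : M)) :=
    hJ _ _ _ (congrArg Subtype.val hxyz)
  apply coe_injective
  calc ((x ⊔ y : AtomJoins M) : M) = atomJoin ((x : M) ⊔ (y : M)) := by
        rw [atomJoin_sup hM, atomJoin_coe, atomJoin_coe]; rfl
    _ = ((x ⊔ (y ⊓ z) : AtomJoins M) : M) := by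
        rw [hM_eq, atomJoin_sup hM, atomJoin_coe]; rfl

end AtomJoins

theorem toAtomJoins_sup (hM : IsBiatomicLat M) (a b : M) :
    toAtomJoins (a ⊔ b) = toAtomJoins a ⊔ toAtomJoins b :=
  Subtype.ext (atomJoin_sup hM a b)

theorem toAtomJoins_inf (a b : M) : toAtomJoins (a ⊓ b) = toAtomJoins a ⊓ toAtomJoins b :=
  AtomJoins.galoisCoinsertion.gc.u_inf

theorem toAtomJoins_bot : toAtomJoins (⊥ : M) = ⊥ := Subtype.ext (le_bot_iff.1 (atomJoin_le ⊥))

end AtomJoin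

theorem AtomisticLat.le_of_forall_isAtom_le {L : Type*} [Lattice L] [OrderBot L]
    (hL : AtomisticLat L) {a b : L} (h : ∀ p, IsAtom p → p ≤ a → p ≤ b) : a ≤ b := by
  obtain ⟨s, hs, hsa⟩ := hL a
  exact hsa.2 fun p hp => h p (hs p hp) (hsa.1 hp)

theorem injective_toAtomJoins_comp {L M : Type*} [Lattice L] [OrderBot L] [Lattice M] [OrderBot M]
    [Fintype M] (hL : AtomisticLat L) {f : L → M} (hf : Function.Injective f)
    (hf_inf : ∀ x y, f (x ⊓ y) = f x ⊓ f y) (hf_bot : f ⊥ = ⊥) :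
    Function.Injective (toAtomJoins ∘ f) := by
  have hf_mono : Monotone f := fun a b hab => by
    rw [← inf_eq_left.2 hab, hf_inf]; exact inf_le_right
  suffices h : ∀ a b, toAtomJoins (f a) ≤ toAtomJoins (f b) → a ≤ b from
    fun a b hab => (h a b hab.le).antisymm (h b a hab.ge)
  refine fun a b hab => hL.le_of_forall_isAtom_le fun p hp hpa => ?_
  by_contra hpb
  have hfp : f p ≠ ⊥ := hf_bot ▸ hf.ne hp.1
  obtain ⟨q, hq, hqp⟩ := (eq_bot_or_exists_atom_le (f p)).resolve_left hfp
  have hqb : q ≤ f b :=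
    ((hq.le_atomJoin (hqp.trans (hf_mono hpa))).trans hab).trans (atomJoin_le _)
  have hpb_bot : p ⊓ b = ⊥ := disjoint_iff.1 (hp.not_le_iff_disjoint.1 hpb)
  exact hq.1 (le_bot_iff.1 (by simpa [← hf_inf, hpb_bot, hf_bot] using le_inf hqp hqb))

theorem stmt_7 (L : Type) [Lattice L] [OrderBot L] (hA : AtomisticLat L)
    (h : ∃ (M : Type) (_ : Lattice M) (_ : Fintype M) (_ : OrderBot M)
      (f : L → M),
        Function.Injective f ∧
        (∀ x y : L, f (x ⊔ y) = f x ⊔ f y) ∧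
        (∀ x y : L, f (x ⊓ y) = f x ⊓ f y) ∧
        f ⊥ = ⊥ ∧
        JoinSemidistributive M ∧ IsBiatomicLat M) :
    ∃ (M : Type) (_ : Lattice M) (_ : Fintype M) (_ : OrderBot M)
      (f : L → M),
        Function.Injective f ∧
        (∀ x y : L, f (x ⊔ y) = f x ⊔ f y) ∧
        (∀ x y : L, f (x ⊓ y) = f x ⊓ f y) ∧
        f ⊥ = ⊥ ∧
        JoinSemidistributive M ∧ IsBiatomicLat M ∧ AtomisticLat M := by
  obtain ⟨M, _, _, _, f, hf, hf_sup, hf_inf, hf_bot, hJ, hM⟩ := h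
  exact ⟨AtomJoins M, inferInstance, inferInstance, inferInstance, toAtomJoins ∘ f,
    injective_toAtomJoins_comp hA hf hf_inf hf_bot,
    fun x y => by simp only [Function.comp_apply, hf_sup, toAtomJoins_sup hM],
    fun x y => by simp only [Function.comp_apply, hf_inf, toAtomJoins_inf],
    by simp only [Function.comp_apply, hf_bot, toAtomJoins_bot],
    AtomJoins.joinSemidistributive hM hJ, AtomJoins.isBiatomicLat hM, AtomJoins.atomisticLat⟩
end

section
/- A finite atomistic lattice K is join-semidistributive if and only if there are no element x ∈ K and distinct atoms u, v of K such that x ∨ u = x ∨ v > x. -/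
variable {L : Type*} [Lattice L]

def IsJsdViolation (x y z : L) : Prop :=
  x ⊔ y = x ⊔ z ∧ x ⊔ (y ⊓ z) < x ⊔ y

lemma isJsdViolation_of_le {m w a c : L} (hac : m ⊔ a = m ⊔ c) (hmw : m ≤ w) (hw : a ⊓ c ≤ w)
    (hlt : w < m ⊔ a) : IsJsdViolation w a c := by
  have hwa : w ⊔ a = m ⊔ a := le_antisymm (sup_le hlt.le le_sup_right) (sup_le_sup_right hmw a)
  have hwc : w ⊔ c = m ⊔ a :=
    le_antisymm (sup_le hlt.le (hac ▸ le_sup_right)) (hac ▸ sup_le_sup_right hmw c)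
  refine ⟨hwa.trans hwc.symm, ?_⟩
  rwa [sup_eq_left.2 hw, hwa]

lemma exists_covBy_of_not_joinSemidistributive [WellFoundedGT L]
    (hJ : ¬ JoinSemidistributive L) : ∃ m a c : L, m ⊔ a = m ⊔ c ∧ a ⊓ c ≤ m ∧ m ⋖ m ⊔ a := by
  have hne : {m : L | ∃ a c, IsJsdViolation m a c}.Nonempty := by
    simp only [JoinSemidistributive, not_forall] at hJ
    obtain ⟨x, y, z, hyz, hne⟩ := hJ
    exact ⟨x, y, z, hyz,
      lt_of_le_of_ne (sup_le le_sup_left (inf_le_left.trans le_sup_right)) (Ne.symm hne)⟩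
  obtain ⟨m, ⟨a, c, hac, hlt⟩, hmax⟩ := wellFounded_gt.has_min _ hne
  have hmax' : ∀ w, m ≤ w → a ⊓ c ≤ w → w < m ⊔ a → w = m := fun w hmw hw hwa =>
    (hmw.lt_or_eq.resolve_left fun hmw' =>
      hmax w ⟨a, c, isJsdViolation_of_le hac hmw hw hwa⟩ hmw').symm
  have hacm : a ⊓ c ≤ m := sup_eq_left.1 (hmax' _ le_sup_left le_sup_right hlt)
  rw [sup_eq_left.2 hacm] at hlt
  exact ⟨m, a, c, hac, hacm, hlt, fun w hmw hwa => hmw.ne' (hmax' w hmw.le (hacm.trans hmw.le) hwa)⟩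

section OrderBot

variable [OrderBot L]

lemma AtomisticLat.exists_isAtom_le_not_le (hA : AtomisticLat L) {w m : L} (h : ¬ w ≤ m) :
    ∃ u, IsAtom u ∧ u ≤ w ∧ ¬ u ≤ m := by
  obtain ⟨s, hs, hlub⟩ := hA w
  by_contra! hall
  exact h (hlub.2 fun p hp => hall p (hs p hp) (hlub.1 hp))

lemma JoinSemidistributive.le_of_sup_eq_sup (hJ : JoinSemidistributive L) {x u v : L}
    (hu : IsAtom u) (hv : IsAtom v) (huv : u ≠ v) (h : x ⊔ u = x ⊔ v) : u ≤ x := by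
  have hxu := hJ x u v h
  rwa [(hu.disjoint_of_ne hv huv).eq_bot, sup_bot_eq, sup_eq_left] at hxu

lemma joinSemidistributive_of_atomistic [WellFoundedGT L] (hA : AtomisticLat L)
    (h : ∀ x u v : L, IsAtom u → IsAtom v → u ≠ v → x ⊔ u = x ⊔ v → u ≤ x) :
    JoinSemidistributive L := by
  by_contra hJ
  obtain ⟨m, a, c, hac, hacm, hcov⟩ := exists_covBy_of_not_joinSemidistributive hJ
  have hsup : ∀ t, t ≤ m ⊔ a → ¬ t ≤ m → m ⊔ t = m ⊔ a := fun t hta htm =>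
    (hcov.eq_or_eq le_sup_left (sup_le le_sup_left hta)).resolve_left fun h => htm (sup_eq_left.1 h)
  obtain ⟨u, hu, hua, hum⟩ := hA.exists_isAtom_le_not_le (left_lt_sup.1 hcov.lt)
  obtain ⟨v, hv, hvc, hvm⟩ := hA.exists_isAtom_le_not_le (left_lt_sup.1 (hac ▸ hcov.lt))
  have huv : u ≠ v := fun huv => hum ((le_inf hua (huv ▸ hvc)).trans hacm)
  have hmu : m ⊔ u = m ⊔ a := hsup u (le_sup_of_le_right hua) hum
  have hmv : m ⊔ v = m ⊔ a := hsup v (hac ▸ le_sup_of_le_right hvc) hvm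
  exact hum (h m u v hu hv huv (hmu.trans hmv.symm))

lemma joinSemidistributive_iff_of_atomistic [WellFoundedGT L] (hA : AtomisticLat L) :
    JoinSemidistributive L ↔
      ∀ x u v : L, IsAtom u → IsAtom v → u ≠ v → x ⊔ u = x ⊔ v → u ≤ x :=
  ⟨fun hJ _ _ _ hu hv huv h => hJ.le_of_sup_eq_sup hu hv huv h,
    joinSemidistributive_of_atomistic hA⟩

end OrderBot

theorem stmt_10 (K : Type) [Lattice K] [Fintype K] [OrderBot K]
    (hA : AtomisticLat K) :
    JoinSemidistributive K ↔
      ¬ ∃ (x u v : K), IsAtom u ∧ IsAtom v ∧ u ≠ v ∧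
        x ⊔ u = x ⊔ v ∧ x < x ⊔ u := by
  rw [joinSemidistributive_iff_of_atomistic hA]
  simp only [not_exists, not_and, left_lt_sup, not_not]
end

section
/- Let L be a finite, atomistic, join-semidistributive lattice, p, q distinct atoms, a ∈ L neither 0 nor an atom, with p ≤ a ∨ q, p ≰ a, and p ≰ x ∨ q for all x < a. Let f(x) = x if q ≰ p ∨ x, and f(x) = p ∨ x otherwise, and let M be the range of f. Then the one-atom extension L(a;M) is join-semidistributive, and its new atom p* satisfies p ≤ p* ∨ q (indeed p < p* ∨ q) and p* < a. -/
def LaMSet (L : Type*) [Lattice L] [BoundedOrder L]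
    (a : L) (M : Set L) : Set (L × Bool) :=
  {p | (p.2 = false ∧ ¬ a ≤ p.1) ∨ (p.2 = true ∧ p.1 ∈ M)}

/-!
Put `c x = p ⊔ x` if `q ≤ p ⊔ x` and `c x = x` otherwise: `c` is a closure operator with range
`M`. As `M` is closed under meets, meets in `L(a;M)` are computed coordinatewise in `L × Bool`,
while the join of `(x, b)` and `(y, b')` is `(c (x ⊔ y), true)` if `b`, `b'` or `a ≤ x ⊔ y`, and
`(x ⊔ y, false)` otherwise. Join-semidistributivity of `L(a;M)` then reduces to two properties of
`c`: it inherits join-semidistributivity from `L`, because `p ⊔ c x = p ⊔ x`; and `a ≤ c m` forces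
`a ≤ m`, by join-semidistributivity of `L` applied to `p ⊓ a = ⊥` and then to `p ⊓ q = ⊥`.
-/

theorem JoinSemidistributive.le_of_sup_eq_sup_s12 {L : Type*} [Lattice L] [OrderBot L]
    (hSD : JoinSemidistributive L) {x y z : L} (h : x ⊔ y = x ⊔ z) (hyz : Disjoint y z) :
    y ≤ x := by
  have := hSD x y z h
  rw [hyz.eq_bot, sup_bot_eq] at this
  exact this ▸ le_sup_right

namespace OrderEmbedding

variable {K P : Type*} [Lattice K] [PartialOrder P] (e : K ↪o P) {X Y : K} {t : P}

theorem map_sup_eq_of_le (ht : t ∈ Set.range e) (hX : e X ≤ t) (hY : e Y ≤ t)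
    (hmin : ∀ Z, e X ≤ e Z → e Y ≤ e Z → t ≤ e Z) : e (X ⊔ Y) = t := by
  obtain ⟨Z, rfl⟩ := ht
  exact le_antisymm (e.monotone (sup_le (e.le_iff_le.1 hX) (e.le_iff_le.1 hY)))
    (hmin _ (e.monotone le_sup_left) (e.monotone le_sup_right))

theorem map_inf_eq_of_le (ht : t ∈ Set.range e) (hX : t ≤ e X) (hY : t ≤ e Y)
    (hmax : ∀ Z, e Z ≤ e X → e Z ≤ e Y → e Z ≤ t) : e (X ⊓ Y) = t := by
  obtain ⟨Z, rfl⟩ := ht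
  exact le_antisymm (hmax _ (e.monotone inf_le_left) (e.monotone inf_le_right))
    (e.monotone (le_inf (e.le_iff_le.1 hX) (e.le_iff_le.1 hY)))

end OrderEmbedding

namespace ClosureOperator

variable {L : Type*} [Lattice L] (c : ClosureOperator L)

theorem IsClosed.inf {x y : L} (hx : c.IsClosed x) (hy : c.IsClosed y) : c.IsClosed (x ⊓ y) :=
  c.isClosed_iff_closure_le.2 <| (c.closure_inf_le x y).trans <| by
    rw [hx.closure_eq, hy.closure_eq]

variable (p q : L)

open Classical in
noncomputable def condSup : ClosureOperator L :=
  .mk' (fun x => if q ≤ p ⊔ x then p ⊔ x else x)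
    (fun x y hxy => by
      dsimp only
      split_ifs with hx hy hy
      · exact sup_le_sup_left hxy p
      · exact absurd (hx.trans (sup_le_sup_left hxy p)) hy
      · exact hxy.trans le_sup_right
      · exact hxy)
    (fun x => by split_ifs <;> simp)
    (fun x => by split_ifs <;> simp_all)

variable {p q}

theorem condSup_of_le {x : L} (h : q ≤ p ⊔ x) : condSup p q x = p ⊔ x := if_pos h

theorem condSup_of_not_le {x : L} (h : ¬ q ≤ p ⊔ x) : condSup p q x = x := if_neg h

theorem sup_condSup (x : L) : p ⊔ condSup p q x = p ⊔ x := by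
  by_cases h : q ≤ p ⊔ x
  · rw [condSup_of_le h, ← sup_assoc, sup_idem]
  · rw [condSup_of_not_le h]

end ClosureOperator

namespace JoinSemidistributive

open ClosureOperator

variable {L : Type*} [Lattice L] {p q : L}

theorem condSup_sup_inf (hSD : JoinSemidistributive L) {x y z : L}
    (h : condSup p q (x ⊔ y) = condSup p q (x ⊔ z)) :
    condSup p q (x ⊔ (y ⊓ z)) = condSup p q (x ⊔ y) := by
  have hp : p ⊔ (x ⊔ y) = p ⊔ (x ⊔ z) := by rw [← sup_condSup, h, sup_condSup]
  have hs : p ⊔ (x ⊔ (y ⊓ z)) = p ⊔ (x ⊔ y) := by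
    simp only [← sup_assoc] at hp ⊢
    rw [← hSD _ _ _ hp]
  by_cases hq : q ≤ p ⊔ (x ⊔ y)
  · rw [condSup_of_le hq, condSup_of_le (hs ▸ hq), hs]
  · rw [condSup_of_not_le hq, condSup_of_not_le (hp ▸ hq)] at h
    rw [condSup_of_not_le hq, condSup_of_not_le (hs ▸ hq), hSD x y z h]

theorem le_of_le_condSup [OrderBot L] (hSD : JoinSemidistributive L) {a m : L}
    (hpa : Disjoint p a) (hpq : Disjoint p q) (hpaq : p ≤ a ⊔ q) (h : a ≤ condSup p q m) :
    a ≤ m := by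
  by_cases hq : q ≤ p ⊔ m
  swap
  · rwa [condSup_of_not_le hq] at h
  rw [condSup_of_le hq] at h
  -- both joins below equal `p ⊔ m`
  have hpqm : p ≤ q ⊔ m := by
    refine hSD.le_of_sup_eq_sup_s12 (z := a) (le_antisymm ?_ ?_) hpa
    · exact sup_le le_sup_left (hpaq.trans (sup_le le_sup_right (le_sup_left.trans le_sup_left)))
    · exact sup_le le_sup_left (h.trans (sup_le le_sup_right (le_sup_right.trans le_sup_left)))
  have hpm : p ≤ m := by
    refine hSD.le_of_sup_eq_sup_s12 (z := q) (le_antisymm ?_ ?_) hpq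
    · exact sup_le le_sup_left (hpqm.trans (sup_comm q m).le)
    · exact sup_le le_sup_left (hq.trans (sup_comm p m).le)
  exact h.trans (sup_le hpm le_rfl)

end JoinSemidistributive

section Extension

variable {L : Type*} [Lattice L] {a : L} {c : ClosureOperator L}

variable (a c) in
open Classical in
/-- The join of `L(a; range c)`, seen inside `L × Bool`. -/
noncomputable def extensionSup (u v : L × Bool) : L × Bool :=
  if u.2 = true ∨ v.2 = true ∨ a ≤ u.1 ⊔ v.1 then (c (u.1 ⊔ v.1), true) else (u.1 ⊔ v.1, false)

theorem extensionSup_of_cond {u v : L × Bool} (h : u.2 = true ∨ v.2 = true ∨ a ≤ u.1 ⊔ v.1) :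
    extensionSup a c u v = (c (u.1 ⊔ v.1), true) := if_pos h

theorem extensionSup_of_not_cond {u v : L × Bool}
    (h : ¬ (u.2 = true ∨ v.2 = true ∨ a ≤ u.1 ⊔ v.1)) :
    extensionSup a c u v = (u.1 ⊔ v.1, false) := if_neg h

open Classical in
theorem extensionSup_comm (u v : L × Bool) : extensionSup a c u v = extensionSup a c v u := by
  unfold extensionSup
  rw [sup_comm v.1]
  exact if_congr (by rw [sup_comm, or_left_comm]) rfl rfl

theorem left_le_extensionSup (u v : L × Bool) : u ≤ extensionSup a c u v := by
  by_cases h : u.2 = true ∨ v.2 = true ∨ a ≤ u.1 ⊔ v.1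
  · rw [extensionSup_of_cond h]
    exact ⟨le_sup_left.trans (c.le_closure _), Bool.le_true _⟩
  · rw [extensionSup_of_not_cond h]
    exact ⟨le_sup_left, by simp_all⟩

theorem right_le_extensionSup (u v : L × Bool) : v ≤ extensionSup a c u v :=
  extensionSup_comm v u ▸ left_le_extensionSup v u

theorem extensionSup_inf (hSD : JoinSemidistributive L)
    (hc : ∀ x y z, c (x ⊔ y) = c (x ⊔ z) → c (x ⊔ (y ⊓ z)) = c (x ⊔ y))
    (ha : ∀ m, a ≤ c m → a ≤ m) {u v w : L × Bool}
    (h : extensionSup a c u v = extensionSup a c u w) :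
    extensionSup a c u v = extensionSup a c u (v ⊓ w) := by
  obtain ⟨x, b⟩ := u
  obtain ⟨y, bv⟩ := v
  obtain ⟨z, bw⟩ := w
  simp only [Prod.mk_inf_mk] at h ⊢
  by_cases hv : b = true ∨ bv = true ∨ a ≤ x ⊔ y <;>
    by_cases hw : b = true ∨ bw = true ∨ a ≤ x ⊔ z <;>
    simp only [extensionSup_of_cond, extensionSup_of_not_cond, hv, hw, not_false_eq_true,
      Prod.mk.injEq, Bool.true_eq_false, Bool.false_eq_true, and_false] at h ⊢
  · have hyz : c (x ⊔ (y ⊓ z)) = c (x ⊔ y) := hc x y z h.1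
    have hza : a ≤ c (x ⊔ y) → a ≤ x ⊔ (y ⊓ z) := fun h' => ha _ (hyz ▸ h')
    have hvw : b = true ∨ (bv ⊓ bw) = true ∨ a ≤ x ⊔ (y ⊓ z) := by
      rcases hv with hb | hbv | hay
      · exact Or.inl hb
      rcases hw with hb | hbw | haz
      · exact Or.inl hb
      · exact Or.inr (Or.inl (by simp [hbv, hbw]))
      · exact Or.inr (Or.inr (hza (h.1 ▸ haz.trans (c.le_closure _))))
      · exact Or.inr (Or.inr (hza (hay.trans (c.le_closure _))))
    rw [extensionSup_of_cond hvw, hyz]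
  · have hyz : x ⊔ y = x ⊔ (y ⊓ z) := hSD x y z h.1
    rw [extensionSup_of_not_cond (by rw [← hyz]; simp_all), hyz]

variable [BoundedOrder L]

theorem extensionSup_mem (u v : L × Bool) : extensionSup a c u v ∈ LaMSet L a (Set.range c) := by
  by_cases h : u.2 = true ∨ v.2 = true ∨ a ≤ u.1 ⊔ v.1
  · rw [extensionSup_of_cond h]
    exact Or.inr ⟨rfl, _, rfl⟩
  · rw [extensionSup_of_not_cond h]
    exact Or.inl ⟨rfl, fun ha => h (Or.inr (Or.inr ha))⟩

theorem extensionSup_le {u v s : L × Bool} (hs : s ∈ LaMSet L a (Set.range c)) (hu : u ≤ s)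
    (hv : v ≤ s) : extensionSup a c u v ≤ s := by
  have hle : u.1 ⊔ v.1 ≤ s.1 := sup_le hu.1 hv.1
  rcases hs with ⟨hs2, hsa⟩ | ⟨hs2, y, hy⟩
  · have hu2 : u.2 = false := Bool.eq_false_of_le_false (hs2 ▸ hu.2)
    have hv2 : v.2 = false := Bool.eq_false_of_le_false (hs2 ▸ hv.2)
    rw [extensionSup_of_not_cond (by simpa [hu2, hv2] using fun ha => hsa (ha.trans hle))]
    exact ⟨hle, hs2 ▸ le_rfl⟩
  · unfold extensionSup
    split_ifs
    · exact ⟨c.closure_min hle (hy ▸ c.isClosed_closure y), hs2 ▸ le_rfl⟩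
    · exact ⟨hle, Bool.false_le _⟩

theorem inf_mem_laMSet {u v : L × Bool} (hu : u ∈ LaMSet L a (Set.range c))
    (hv : v ∈ LaMSet L a (Set.range c)) : u ⊓ v ∈ LaMSet L a (Set.range c) := by
  rcases hu with ⟨hu2, hua⟩ | ⟨hu2, x, hx⟩
  · exact Or.inl ⟨by simp [hu2], fun ha => hua (ha.trans inf_le_left)⟩
  rcases hv with ⟨hv2, hva⟩ | ⟨hv2, y, hy⟩
  · exact Or.inl ⟨by simp [hv2], fun ha => hva (ha.trans inf_le_right)⟩
  refine Or.inr ⟨by simp [hu2, hv2], u.1 ⊓ v.1, ?_⟩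
  rw [Prod.fst_inf, ← hx, ← hy]
  exact ((c.isClosed_closure x).inf c (c.isClosed_closure y)).closure_eq

variable {K : Type*} [Lattice K] {e : K ↪o L × Bool}

theorem map_sup_eq_extensionSup (he : Set.range e = LaMSet L a (Set.range c)) (X Y : K) :
    e (X ⊔ Y) = extensionSup a c (e X) (e Y) :=
  e.map_sup_eq_of_le (he ▸ extensionSup_mem _ _) (left_le_extensionSup _ _)
    (right_le_extensionSup _ _) fun Z => extensionSup_le (he ▸ ⟨Z, rfl⟩)

theorem map_inf_eq_inf (he : Set.range e = LaMSet L a (Set.range c)) (X Y : K) :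
    e (X ⊓ Y) = e X ⊓ e Y :=
  e.map_inf_eq_of_le (he ▸ inf_mem_laMSet (he ▸ ⟨X, rfl⟩) (he ▸ ⟨Y, rfl⟩)) inf_le_left
    inf_le_right fun _ => le_inf

theorem joinSemidistributive_of_range_eq (he : Set.range e = LaMSet L a (Set.range c))
    (hSD : JoinSemidistributive L)
    (hc : ∀ x y z, c (x ⊔ y) = c (x ⊔ z) → c (x ⊔ (y ⊓ z)) = c (x ⊔ y))
    (ha : ∀ m, a ≤ c m → a ≤ m) : JoinSemidistributive K := by
  intro X Y Z h
  apply e.injective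
  rw [map_sup_eq_extensionSup he, map_sup_eq_extensionSup he, map_inf_eq_inf he]
  exact extensionSup_inf hSD hc ha (by rw [← map_sup_eq_extensionSup he,
    ← map_sup_eq_extensionSup he, h])

theorem map_eq_of_isLeast (he : Set.range e = LaMSet L a (Set.range c)) {x : L} (hx : ¬ a ≤ x)
    {J : K} (hJ : IsLeast {Z | (x, false) ≤ e Z} J) : e J = (x, false) := by
  obtain ⟨Z, hZ⟩ : (x, false) ∈ Set.range e := he ▸ Or.inl ⟨rfl, hx⟩
  exact le_antisymm (hZ ▸ e.monotone (hJ.2 hZ.ge)) hJ.1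

theorem snd_eq_true_of_le (he : Set.range e = LaMSet L a (Set.range c)) {X : K}
    (h : a ≤ (e X).1) : (e X).2 = true := by
  rcases (he ▸ ⟨X, rfl⟩ : e X ∈ LaMSet L a (Set.range c)) with ⟨_, hna⟩ | ⟨h2, _⟩
  exacts [absurd h hna, h2]

theorem isAtom_of_map_eq_bot_true [OrderBot K] (he : Set.range e = LaMSet L a (Set.range c))
    (ha : a ≠ ⊥) {P : K} (hP : e P = (⊥, true)) : IsAtom P := by
  obtain ⟨Z, hZ⟩ : (⊥, false) ∈ Set.range e := he ▸ Or.inl ⟨rfl, fun h => ha (le_bot_iff.1 h)⟩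
  have hbot : e ⊥ = ⊥ := le_bot_iff.1 ((e.monotone bot_le).trans hZ.le)
  refine e.isAtom_of_map_bot_of_image hbot (hP ▸ bot_covBy_iff.1 ?_)
  exact Prod.mk_covBy_mk_iff_right.2 (bot_covBy_top (α := Bool))

end Extension

theorem stmt_12_general (L : Type) [Lattice L] [BoundedOrder L]
    (hSD : JoinSemidistributive L)
    (p q a : L) (hp : IsAtom p) (hq : IsAtom q) (hpq : p ≠ q)
    (h1 : p ≤ a ⊔ q) (h2 : ¬ p ≤ a)
    (f : L → L)
    (hf1 : ∀ x : L, ¬ q ≤ p ⊔ x → f x = x)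
    (hf2 : ∀ x : L, q ≤ p ⊔ x → f x = p ⊔ x)
    (K : Type) [Lattice K] [BoundedOrder K] (e : K → L × Bool)
    (hrange : Set.range e = LaMSet L a (Set.range f))
    (hmono : ∀ x y : K, x ≤ y ↔ e x ≤ e y)
    (j : L → K)
    (hj : ∀ x : L, IsLeast {z : K | ((x, false) : L × Bool) ≤ e z} (j x)) :
    JoinSemidistributive K ∧
    ∃ pstar : K, e pstar = ((⊥ : L), true) ∧ IsAtom pstar ∧
      j p < pstar ⊔ j q ∧ pstar < j a := by
  obtain rfl : f = ClosureOperator.condSup p q := funext fun x => by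
    by_cases hx : q ≤ p ⊔ x
    · rw [hf2 x hx, ClosureOperator.condSup_of_le hx]
    · rw [hf1 x hx, ClosureOperator.condSup_of_not_le hx]
  let E : K ↪o L × Bool := .ofMapLEIff e fun x y => (hmono x y).symm
  have hE : Set.range E = LaMSet L a (Set.range (ClosureOperator.condSup p q)) := hrange
  have hpq_disj : Disjoint p q := hp.disjoint_of_ne hq hpq
  have hpa : Disjoint p a := hp.not_le_iff_disjoint.1 h2
  have hnpq : ¬ p ≤ q := hp.not_le_iff_disjoint.2 hpq_disj
  have haq : ¬ a ≤ q := fun h => hnpq (h1.trans (sup_le h le_rfl))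
  have ha0 : a ≠ ⊥ := by rintro rfl; exact hnpq (by simpa using h1)
  have hap : ¬ a ≤ p := fun h => h2 ((hp.le_iff_eq ha0).1 h).ge
  obtain ⟨P, hP⟩ : ((⊥ : L), true) ∈ Set.range E := hE ▸ Or.inr ⟨rfl, ⊥,
    ClosureOperator.condSup_of_not_le (by simpa using hq.not_le_iff_disjoint.2 hpq_disj.symm)⟩
  refine ⟨joinSemidistributive_of_range_eq hE hSD (fun _ _ _ => hSD.condSup_sup_inf)
    (fun _ => hSD.le_of_le_condSup hpa hpq_disj h1), P, hP, isAtom_of_map_eq_bot_true hE ha0 hP,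
    ?_, ?_⟩
  · rw [← E.lt_iff_lt, map_sup_eq_extensionSup hE, hP, map_eq_of_isLeast hE hap (hj p),
      map_eq_of_isLeast hE haq (hj q), extensionSup_of_cond (Or.inl rfl), bot_sup_eq,
      ClosureOperator.condSup_of_le le_sup_right]
    exact Prod.mk_lt_mk.2 (Or.inr ⟨le_sup_left, Bool.false_lt_true⟩)
  · have hja : a ≤ (E (j a)).1 := (hj a).1.1
    rw [← E.lt_iff_lt, hP, Prod.lt_iff]
    exact Or.inl ⟨(bot_lt_iff_ne_bot.2 ha0).trans_le hja, (snd_eq_true_of_le hE hja).ge⟩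

/-- in the setting of Lemma `OneBB`, the one-atom extension
`L(a; range f)` (presented as a lattice `K` order-isomorphic to the subposet
`LaMSet L a (Set.range f)` of `L × 2`, with `j` the canonical embedding of
`L`) is join-semidistributive, and its new atom `p* = (⊥,1)` satisfies
`p < p* ⊔ q` and `p* < a`. -/
theorem stmt_12 (L : Type) [Lattice L] [Fintype L] [BoundedOrder L]
    (hA : AtomisticLat L) (hSD : JoinSemidistributive L)
    (p q a : L) (hp : IsAtom p) (hq : IsAtom q) (hpq : p ≠ q)
    (ha0 : a ≠ ⊥) (haAt : ¬ IsAtom a)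
    (h1 : p ≤ a ⊔ q) (h2 : ¬ p ≤ a)
    (h3 : ∀ x : L, x < a → ¬ p ≤ x ⊔ q)
    (f : L → L)
    (hf1 : ∀ x : L, ¬ q ≤ p ⊔ x → f x = x)
    (hf2 : ∀ x : L, q ≤ p ⊔ x → f x = p ⊔ x)
    (K : Type) [Lattice K] [BoundedOrder K] (e : K → L × Bool)
    (hrange : Set.range e = LaMSet L a (Set.range f))
    (hmono : ∀ x y : K, x ≤ y ↔ e x ≤ e y)
    (j : L → K)
    (hj : ∀ x : L, IsLeast {z : K | ((x, false) : L × Bool) ≤ e z} (j x)) :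
    JoinSemidistributive K ∧
    ∃ pstar : K, e pstar = ((⊥ : L), true) ∧ IsAtom pstar ∧
      j p < pstar ⊔ j q ∧ pstar < j a :=
  stmt_12_general L hSD p q a hp hq hpq h1 h2 f hf1 hf2 K e hrange hmono j hj
end
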